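/- For all linear endomorphisms X, Y of K⟨A⟩, for every real inner product space and every family of vectors (V_w), and at every grade n: ⟨X, Y⟩ = ⟨|S|∘X, |S|∘Y⟩, where |S| is the reversal endomorphism and the inner product is taken over the words of length n. -/

import Mathlib

open Finsupp

/-- Words over the alphabet `A = {0,1,…,d}`. -/
abbrev Word (d : ℕ) : Type := List (Fin (d+1))

/-- The free real vector space with basis the set of all words. -/
abbrev KA (d : ℕ) : Type := Word d →₀ ℝ

/-- Shuffle product of two words, as an element of `KA d`. -/
noncomputable def shuffleWord (d : ℕ) : Word d → Word d → KA d
  | [], v => Finsupp.single v 1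
  | a :: u, [] => Finsupp.single (a :: u) 1
  | a :: u, b :: v =>
      Finsupp.mapDomain (List.cons a) (shuffleWord d u (b :: v)) +
      Finsupp.mapDomain (List.cons b) (shuffleWord d (a :: u) v)
  termination_by u v => u.length + v.length

/-- Bilinear extension of the shuffle product to `KA d`. -/
noncomputable def sh (d : ℕ) (x y : KA d) : KA d :=
  x.sum fun u cu => y.sum fun v cv => (cu * cv) • shuffleWord d u v

/-- Admissible words: concatenations of blocks each of which is the single
letter `0` or a pair `aa` with `a ≠ 0`. -/
inductive Admissible (d : ℕ) : Word d → Prop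
  | nil : Admissible d []
  | zero {w : Word d} : Admissible d w → Admissible d (0 :: w)
  | pair {w : Word d} (a : Fin (d+1)) : a ≠ 0 → Admissible d w →
      Admissible d (a :: a :: w)

/-- Number of `0` letters. -/
def zc (d : ℕ) (w : Word d) : ℕ := w.count 0

/-- Half the number of nonzero letters. -/
def dc (d : ℕ) (w : Word d) : ℕ := (w.length - w.count 0) / 2

def nc (d : ℕ) (w : Word d) : ℕ := zc d w + dc d w

open Classical in
/-- The expectation map on words. -/
noncomputable def Ebar (d : ℕ) (t : ℝ) (w : Word d) : ℝ :=
  if Admissible d w then t ^ nc d w / (2 ^ dc d w * Nat.factorial (nc d w)) else 0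

/-- Linear extension of the expectation map to `KA d`. -/
noncomputable def EbarL (d : ℕ) (t : ℝ) (x : KA d) : ℝ :=
  x.sum fun w c => c * Ebar d t w

/-- The linear endomorphism of `KA d` determined by values on basis words. -/
noncomputable def wordLift (d : ℕ) (f : Word d → KA d) : KA d →ₗ[ℝ] KA d :=
  Finsupp.lsum ℝ fun w => LinearMap.toSpanSingleton ℝ (KA d) (f w)

/-- The identity endomorphism `id`. -/
noncomputable def idE (d : ℕ) : KA d →ₗ[ℝ] KA d := LinearMap.id

/-- The reversal endomorphism `|S|`. -/
noncomputable def revE (d : ℕ) : KA d →ₗ[ℝ] KA d :=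
  wordLift d fun w => Finsupp.single w.reverse 1

/-- The antipode `S`. -/
noncomputable def Sa (d : ℕ) : KA d →ₗ[ℝ] KA d :=
  wordLift d fun w => Finsupp.single w.reverse ((-1 : ℝ) ^ w.length)

/-- The convolution unit `ν`. -/
noncomputable def nuE (d : ℕ) : KA d →ₗ[ℝ] KA d :=
  wordLift d fun w => if w = [] then Finsupp.single ([] : Word d) 1 else 0

/-- The expectation endomorphism `E`. -/
noncomputable def EE (d : ℕ) (t : ℝ) : KA d →ₗ[ℝ] KA d :=
  wordLift d fun w => Finsupp.single ([] : Word d) (Ebar d t w)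

/-- The convolution product `X ⋆ Y`. -/
noncomputable def conv (d : ℕ) (X Y : KA d →ₗ[ℝ] KA d) : KA d →ₗ[ℝ] KA d :=
  wordLift d fun w => ∑ k ∈ Finset.range (w.length + 1),
    sh d (X (Finsupp.single (w.take k) 1)) (Y (Finsupp.single (w.drop k) 1))

/-- Convolution powers, `X^{⋆0} = ν`. -/
noncomputable def convPow (d : ℕ) (X : KA d →ₗ[ℝ] KA d) : ℕ → (KA d →ₗ[ℝ] KA d)
  | 0 => nuE d
  | k + 1 => conv d X (convPow d X k)

/-- The inner product `⟨X,Y⟩` of endomorphisms, taken over the words of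
length `n`, relative to the family of vectors `Vf`. -/
noncomputable def ip (d : ℕ) (t : ℝ) {H : Type*} [NormedAddCommGroup H]
    [InnerProductSpace ℝ H] (Vf : Word d → H) (n : ℕ)
    (X Y : KA d →ₗ[ℝ] KA d) : ℝ :=
  ∑ u : Fin n → Fin (d+1), ∑ v : Fin n → Fin (d+1),
    EbarL d t (sh d (X (Finsupp.single (List.ofFn u) 1))
                    (Y (Finsupp.single (List.ofFn v) 1))) *
      (inner ℝ (Vf (List.ofFn u)) (Vf (List.ofFn v)) : ℝ)

/-- Positive semidefiniteness of the expectation Gram matrix at grade `n`: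
indexed by the words of length `n` together with the empty word. -/
def gramPSD (d n : ℕ) (t : ℝ) : Prop :=
  ∀ c : Option (Fin n → Fin (d+1)) → ℝ,
    0 ≤ ∑ x : Option (Fin n → Fin (d+1)), ∑ y : Option (Fin n → Fin (d+1)),
      c x * c y *
        EbarL d t (shuffleWord d (x.elim ([] : Word d) List.ofFn)
                                 (y.elim ([] : Word d) List.ofFn))

/-! Reversing words maps shuffles to shuffles: the defining recursion of `⧢` on first letters has a
mirror image on last letters, so `|S| (u ⧢ v) = |S| u ⧢ |S| v`. Reversal also preserves admissibility
and the letter counts, so `Ē ∘ |S| = Ē`. Hence every summand of `⟨|S| ∘ X, |S| ∘ Y⟩` equals the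
corresponding summand of `⟨X, Y⟩`. -/

section Shuffle

variable {d : ℕ}

lemma shuffleWord_nil_left (w : Word d) : shuffleWord d [] w = single w 1 := by
  rw [shuffleWord]

lemma shuffleWord_nil_right (w : Word d) : shuffleWord d w [] = single w 1 := by
  cases w <;> simp [shuffleWord]

lemma shuffleWord_cons_cons (a b : Fin (d+1)) (u v : Word d) :
    shuffleWord d (a :: u) (b :: v) =
      mapDomain (List.cons a) (shuffleWord d u (b :: v)) +
      mapDomain (List.cons b) (shuffleWord d (a :: u) v) := by
  rw [shuffleWord]

lemma mapDomain_cons_mapDomain_append (c : Fin (d+1)) (s : Word d) (x : KA d) :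
    mapDomain (List.cons c) (mapDomain (· ++ s) x) =
      mapDomain (· ++ s) (mapDomain (List.cons c) x) := by
  rw [← mapDomain_comp, ← mapDomain_comp]
  rfl

theorem shuffleWord_append_singleton (a b : Fin (d+1)) :
    (u v : Word d) → shuffleWord d (u ++ [a]) (v ++ [b]) =
      mapDomain (· ++ [a]) (shuffleWord d u (v ++ [b])) +
      mapDomain (· ++ [b]) (shuffleWord d (u ++ [a]) v)
  | [], [] => by
      simp only [List.nil_append, shuffleWord_cons_cons, shuffleWord_nil_left,
        shuffleWord_nil_right, mapDomain_single, List.cons_append]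
      abel
  | [], c :: v => by
      have ih := shuffleWord_append_singleton a b [] v
      simp only [List.nil_append, List.cons_append] at ih ⊢
      rw [shuffleWord_cons_cons, ih, shuffleWord_cons_cons a c [] v]
      simp only [mapDomain_add, mapDomain_single, mapDomain_cons_mapDomain_append,
        shuffleWord_nil_left, List.cons_append]
      abel
  | e :: u, [] => by
      have ih := shuffleWord_append_singleton a b u []
      simp only [List.nil_append, List.cons_append] at ih ⊢
      rw [shuffleWord_cons_cons, ih, shuffleWord_cons_cons e b u []]
      simp only [mapDomain_add, mapDomain_single, mapDomain_cons_mapDomain_append,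
        shuffleWord_nil_right, List.cons_append]
      abel
  | e :: u, f :: v => by
      have ih₁ := shuffleWord_append_singleton a b u (f :: v)
      have ih₂ := shuffleWord_append_singleton a b (e :: u) v
      simp only [List.cons_append] at ih₁ ih₂ ⊢
      rw [shuffleWord_cons_cons e f, ih₁, ih₂, shuffleWord_cons_cons e f u,
        shuffleWord_cons_cons e f (u ++ [a]) v]
      simp only [mapDomain_add, mapDomain_cons_mapDomain_append]
      abel
  termination_by u v => u.length + v.length

lemma mapDomain_reverse_mapDomain_cons (a : Fin (d+1)) (x : KA d) :
    mapDomain List.reverse (mapDomain (List.cons a) x) =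
      mapDomain (· ++ [a]) (mapDomain List.reverse x) := by
  rw [← mapDomain_comp, ← mapDomain_comp]
  congr 1
  funext w
  simp

theorem mapDomain_reverse_shuffleWord :
    (u v : Word d) → mapDomain List.reverse (shuffleWord d u v) =
      shuffleWord d u.reverse v.reverse
  | [], v => by simp [shuffleWord_nil_left]
  | a :: u, [] => by simp [shuffleWord_nil_right]
  | a :: u, b :: v => by
      rw [shuffleWord_cons_cons, mapDomain_add, mapDomain_reverse_mapDomain_cons,
        mapDomain_reverse_mapDomain_cons, mapDomain_reverse_shuffleWord u (b :: v),
        mapDomain_reverse_shuffleWord (a :: u) v, List.reverse_cons, List.reverse_cons,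
        shuffleWord_append_singleton]
  termination_by u v => u.length + v.length

lemma revE_apply (x : KA d) : revE d x = mapDomain List.reverse x := by
  rw [revE, wordLift, lsum_apply, mapDomain]
  refine sum_congr fun w _ => ?_
  simp [LinearMap.toSpanSingleton_apply]

lemma revE_sh (x y : KA d) : revE d (sh d x y) = sh d (revE d x) (revE d y) := by
  simp only [revE_apply, sh, sum_mapDomain_index_inj List.reverse_injective, mapDomain_sum,
    mapDomain_smul, mapDomain_reverse_shuffleWord]

end Shuffle

section Expectation

variable {d : ℕ}

lemma Admissible.append_zero {w : Word d} (h : Admissible d w) : Admissible d (w ++ [0]) := by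
  induction h with
  | nil => exact .zero .nil
  | zero _ ih => exact .zero ih
  | pair a ha _ ih => exact .pair a ha ih

lemma Admissible.append_pair {w : Word d} {a : Fin (d+1)} (ha : a ≠ 0) (h : Admissible d w) :
    Admissible d (w ++ [a, a]) := by
  induction h with
  | nil => exact .pair a ha .nil
  | zero _ ih => exact .zero ih
  | pair b hb _ ih => exact .pair b hb ih

lemma Admissible.reverse {w : Word d} (h : Admissible d w) : Admissible d w.reverse := by
  induction h with
  | nil => exact .nil
  | zero _ ih => simpa using ih.append_zero
  | pair a ha _ ih => simpa using ih.append_pair ha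

lemma admissible_reverse_iff {w : Word d} : Admissible d w.reverse ↔ Admissible d w :=
  ⟨fun h => by simpa using h.reverse, Admissible.reverse⟩

lemma Ebar_reverse (t : ℝ) (w : Word d) : Ebar d t w.reverse = Ebar d t w := by
  unfold Ebar nc zc dc
  rw [admissible_reverse_iff, List.count_reverse, List.length_reverse]

lemma EbarL_revE (t : ℝ) (x : KA d) : EbarL d t (revE d x) = EbarL d t x := by
  simp only [EbarL, revE_apply, sum_mapDomain_index_inj List.reverse_injective, Ebar_reverse]

end Expectation

theorem stmt_9_general (d n : ℕ) (t : ℝ)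
    {H : Type*} [NormedAddCommGroup H] [InnerProductSpace ℝ H]
    (Vf : Word d → H) (X Y : KA d →ₗ[ℝ] KA d) :
    ip d t Vf n X Y = ip d t Vf n (revE d ∘ₗ X) (revE d ∘ₗ Y) := by
  simp only [ip, LinearMap.comp_apply, ← revE_sh, EbarL_revE]

theorem stmt_9 (d n : ℕ) (hd : 1 ≤ d) (hn : 1 ≤ n) (t : ℝ) (ht : 0 < t)
    {H : Type*} [NormedAddCommGroup H] [InnerProductSpace ℝ H]
    (Vf : Word d → H) (X Y : KA d →ₗ[ℝ] KA d) :
    ip d t Vf n X Y = ip d t Vf n (revE d ∘ₗ X) (revE d ∘ₗ Y) :=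
  stmt_9_general d n t Vf X Y
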